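/- arXiv:2004.07643 — 3 statements merged into one kernel-verified Lean document; each statement's English description precedes it below -/
import Mathlib

section
/- For any ergodic shift-invariant measure ν on a subshift X ⊆ {0,1}^ℤ, the chain of inequalities d_ν ≤ D_ν ≤ D = d holds, and consequently the variational principle D = sup_{ν ∈ M(X,S)} D_ν holds. -/
open MeasureTheory Filter Real
open scoped ENNReal

attribute [local instance] Classical.propDecidable

/-- The two-sided binary sequence space `{0,1}^ℤ`. -/
abbrev Omega : Type := ℤ → Bool

/-- The left shift. -/
def shift (x : Omega) : Omega := fun n => x (n + 1)

/-- The cylinder set of a word `W` of length `n`, read from coordinate `0`. -/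
def cyl (n : ℕ) (W : Fin n → Bool) : Set Omega := {x | ∀ i : Fin n, x ((i : ℕ) : ℤ) = W i}

/-- The language of `X`: words of length `n` appearing (at position 0) in some point of `X`. -/
def lang (X : Set Omega) (n : ℕ) : Set (Fin n → Bool) :=
  {W | ∃ x ∈ X, ∀ i : Fin n, x ((i : ℕ) : ℤ) = W i}

/-- Number of ones in a word. -/
def ones {n : ℕ} (W : Fin n → Bool) : ℕ := (Finset.univ.filter fun i => W i = true).card

/-- `maxOnes X n` is the maximal number of ones in an allowed word of length `n`. -/
noncomputable def maxOnes (X : Set Omega) (n : ℕ) : ℕ :=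
  (Finset.univ.filter fun W : Fin n → Bool => W ∈ lang X n).sup ones

/-- `d(X,S)`: the supremum over shift-invariant Borel probability measures concentrated
on `X` of the measure of the cylinder `[1] = {x | x 0 = true}`. -/
noncomputable def dsup (X : Set Omega) : ℝ :=
  ⨆ μ : {μ : Measure Omega // IsProbabilityMeasure μ ∧ μ X = 1 ∧ Measure.map shift μ = μ},
    ((μ : Measure Omega) {x | x 0 = true}).toReal

/-- Maximal number of ones in an allowed word of length `n` of positive `ν`-measure. -/
noncomputable def maxOnesPos (X : Set Omega) (ν : Measure Omega) (n : ℕ) : ℕ :=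
  (Finset.univ.filter fun W : Fin n → Bool => W ∈ lang X n ∧ ν (cyl n W) ≠ 0).sup ones

/-- `D_ν`, the measure-theoretic upper density of ones (the limit of the subadditive
sequence `maxOnesPos X ν n / n`, expressed as its infimum over `n ≥ 1`). -/
noncomputable def Dnu (X : Set Omega) (ν : Measure Omega) : ℝ :=
  ⨅ n : ℕ, (maxOnesPos X ν (n + 1) : ℝ) / (n + 1)

/-- `D`, the topological upper density of ones. -/
noncomputable def Dtop (X : Set Omega) : ℝ :=
  ⨅ n : ℕ, (maxOnes X (n + 1) : ℝ) / (n + 1)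

/-!
Both densities are limits of subadditive sequences (Fekete). For an invariant `μ` carried by `X`,
integrating the number of ones of the word of length `n` read at `x` gives `n μ[1]`, and almost
every such word is allowed and of positive measure, so `μ[1] ≤ D_μ ≤ D`. Conversely, the empirical
measures of orbit segments starting with allowed words carrying the maximal number of ones have a
weak-* limit point (Krylov–Bogolyubov): it is invariant, carried by the closed set `X`
(portmanteau), and gives the clopen cylinder `[1]` mass `D`. Hence both suprema equal `D`.
-/

open scoped Finset BoundedContinuousFunction Topology

section EmpiricalMeasure

variable {E : Type*} [MeasurableSpace E]

noncomputable def empiricalMeasure (T : E → E) (x : E) (n : ℕ) : ProbabilityMeasure E :=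
  ⟨((n : ℝ≥0∞) + 1)⁻¹ • ∑ i ∈ Finset.range (n + 1), Measure.dirac (T^[i] x), by
    constructor
    simp [ENNReal.inv_mul_cancel]⟩

lemma empiricalMeasure_apply (T : E → E) (x : E) (n : ℕ) {s : Set E} (hs : MeasurableSet s) :
    (empiricalMeasure T x n : Measure E) s =
      ((n : ℝ≥0∞) + 1)⁻¹ * #{i ∈ Finset.range (n + 1) | T^[i] x ∈ s} := by
  simp [empiricalMeasure, Measure.dirac_apply' _ hs, Set.indicator_apply, Finset.sum_boole]

lemma empiricalMeasure_apply_eq_one (T : E → E) (x : E) (n : ℕ) {s : Set E}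
    (hs : MeasurableSet s) (h : ∀ i, T^[i] x ∈ s) :
    (empiricalMeasure T x n : Measure E) s = 1 := by
  rw [empiricalMeasure_apply T x n hs, Finset.filter_true_of_mem fun i _ => h i]
  simp [ENNReal.inv_mul_cancel]

lemma integral_empiricalMeasure [TopologicalSpace E] [OpensMeasurableSpace E] (T : E → E)
    (x : E) (n : ℕ) (f : E →ᵇ ℝ) :
    ∫ y, f y ∂(empiricalMeasure T x n : Measure E) =
      ((n : ℝ) + 1)⁻¹ * ∑ i ∈ Finset.range (n + 1), f (T^[i] x) := by
  simp [empiricalMeasure, integral_smul_measure,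
    integral_finsetSum_measure fun i _ => f.integrable (Measure.dirac _),
    integral_dirac' _ _ f.continuous.stronglyMeasurable, ENNReal.toReal_add]

lemma integral_comp_sub_integral_empiricalMeasure [TopologicalSpace E] [OpensMeasurableSpace E]
    (T : E → E) (x : E) (n : ℕ) (f : E →ᵇ ℝ) (hT : Continuous T) :
    ∫ y, f.compContinuous ⟨T, hT⟩ y ∂(empiricalMeasure T x n : Measure E) -
        ∫ y, f y ∂(empiricalMeasure T x n : Measure E) =
      ((n : ℝ) + 1)⁻¹ * (f (T^[n + 1] x) - f x) := by
  simp only [integral_empiricalMeasure, ← mul_sub, ← Finset.sum_sub_distrib]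
  congr 1
  simpa [Function.iterate_succ_apply'] using
    Finset.sum_range_sub (fun i => f (T^[i] x)) (n + 1)

theorem map_eq_of_tendsto_empiricalMeasure [TopologicalSpace E] [HasOuterApproxClosed E]
    [BorelSpace E] {T : E → E} (hT : Continuous T) {ι : Type*} {L : Filter ι} [L.NeBot]
    {x : ι → E} {n : ι → ℕ} (hn : Tendsto n L atTop) {μ : ProbabilityMeasure E}
    (hμ : Tendsto (fun k => empiricalMeasure T (x k) (n k)) L (𝓝 μ)) :
    (μ : Measure E).map T = μ := by
  refine ext_of_forall_integral_eq_of_IsFiniteMeasure fun f => ?_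
  rw [integral_map hT.aemeasurable f.continuous.aestronglyMeasurable]
  have h_comp := ProbabilityMeasure.tendsto_iff_forall_integral_tendsto.1 hμ
    (f.compContinuous ⟨T, hT⟩)
  have h_f := ProbabilityMeasure.tendsto_iff_forall_integral_tendsto.1 hμ f
  have h_diff : Tendsto (fun k => ((n k : ℝ) + 1)⁻¹ * (f (T^[n k + 1] (x k)) - f (x k)))
      L (𝓝 0) := by
    have h_inv : Tendsto (fun k => ((n k : ℝ) + 1)⁻¹) L (𝓝 0) :=
      (tendsto_inv_atTop_zero.comp (tendsto_atTop_add_const_right _ 1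
        (tendsto_natCast_atTop_atTop.comp hn)))
    refine h_inv.zero_mul_isBoundedUnder_le ⟨2 * ‖f‖, eventually_map.2 ?_⟩
    exact Eventually.of_forall fun k => by
      simpa [Real.dist_eq] using f.dist_le_two_norm (T^[n k + 1] (x k)) (x k)
  refine tendsto_nhds_unique h_comp
    ((add_zero (∫ y, f y ∂(μ : Measure E)) ▸ h_f.add h_diff).congr fun k => ?_)
  rw [← integral_comp_sub_integral_empiricalMeasure, add_sub_cancel]

end EmpiricalMeasure

lemma continuous_shift : Continuous shift :=
  continuous_pi fun n => continuous_apply (n + 1)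

lemma measurable_shift : Measurable shift :=
  continuous_shift.measurable

lemma shift_iterate_apply (m : ℕ) (x : Omega) (i : ℤ) : shift^[m] x i = x (i + m) := by
  induction m generalizing x with
  | zero => simp
  | succ m ih =>
    rw [Function.iterate_succ_apply, ih]
    simp only [shift, Nat.cast_succ, add_assoc]

lemma isClopen_setOf_apply_eq_true (i : ℤ) : IsClopen {x : Omega | x i = true} :=
  (isClopen_discrete {true}).preimage (continuous_apply i)

lemma measurableSet_setOf_apply_eq_true (i : ℤ) : MeasurableSet {x : Omega | x i = true} :=
  (isClopen_setOf_apply_eq_true i).isClosed.measurableSet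

def word (n : ℕ) (x : Omega) : Fin n → Bool := fun i => x i

lemma measurable_word (n : ℕ) : Measurable (word n) :=
  measurable_pi_lambda _ fun _ => measurable_pi_apply _

lemma cyl_eq_preimage_word (n : ℕ) (W : Fin n → Bool) : cyl n W = word n ⁻¹' {W} := by
  ext x
  simp [cyl, word, funext_iff]

lemma measurableSet_cyl (n : ℕ) (W : Fin n → Bool) : MeasurableSet (cyl n W) := by
  rw [cyl_eq_preimage_word]
  exact measurable_word n (measurableSet_singleton W)

lemma ones_eq_sum {n : ℕ} (W : Fin n → Bool) :
    ones W = ∑ i : Fin n, if W i = true then 1 else 0 :=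
  Finset.card_filter _ _

lemma ones_append (m n : ℕ) (W : Fin (m + n) → Bool) :
    ones W = ones (fun i => W (Fin.castAdd n i)) + ones (fun i => W (Fin.natAdd m i)) := by
  simp only [ones_eq_sum, Fin.sum_univ_add]

lemma cyl_subset_cyl_castAdd (m n : ℕ) (W : Fin (m + n) → Bool) :
    cyl (m + n) W ⊆ cyl m (fun i => W (Fin.castAdd n i)) :=
  fun _ hx i => hx (Fin.castAdd n i)

lemma cyl_subset_preimage_cyl_natAdd (m n : ℕ) (W : Fin (m + n) → Bool) :
    cyl (m + n) W ⊆ shift^[m] ⁻¹' cyl n (fun i => W (Fin.natAdd m i)) := by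
  intro x hx i
  simpa [shift_iterate_apply, add_comm] using hx (Fin.natAdd m i)

lemma sup_ones_add_le {P : ∀ n, (Fin n → Bool) → Prop} [∀ n, DecidablePred (P n)]
    (h_castAdd : ∀ m n W, P (m + n) W → P m (fun i => W (Fin.castAdd n i)))
    (h_natAdd : ∀ m n W, P (m + n) W → P n (fun i => W (Fin.natAdd m i))) (m n : ℕ) :
    (Finset.univ.filter (P (m + n))).sup ones ≤
      (Finset.univ.filter (P m)).sup ones + (Finset.univ.filter (P n)).sup ones := by
  refine Finset.sup_le fun W hW => ?_
  rw [Finset.mem_filter] at hW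
  rw [ones_append]
  gcongr <;> refine Finset.le_sup (Finset.mem_filter.2 ⟨Finset.mem_univ _, ?_⟩)
  exacts [h_castAdd m n W hW.2, h_natAdd m n W hW.2]

lemma maxOnes_add_le {X : Set Omega} (hX : Set.MapsTo shift X X) (m n : ℕ) :
    maxOnes X (m + n) ≤ maxOnes X m + maxOnes X n :=
  sup_ones_add_le (P := fun n W => W ∈ lang X n)
    (fun m n W ⟨x, hx, hW⟩ => ⟨x, hx, cyl_subset_cyl_castAdd m n W hW⟩)
    (fun m n W ⟨x, hx, hW⟩ =>
      ⟨shift^[m] x, hX.iterate m hx, cyl_subset_preimage_cyl_natAdd m n W hW⟩) m n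

lemma maxOnesPos_add_le {X : Set Omega} (hX : Set.MapsTo shift X X) {μ : Measure Omega}
    (hμ : MeasurePreserving shift μ μ) (m n : ℕ) :
    maxOnesPos X μ (m + n) ≤ maxOnesPos X μ m + maxOnesPos X μ n := by
  refine sup_ones_add_le (P := fun n W => W ∈ lang X n ∧ μ (cyl n W) ≠ 0)
    (fun m n W ⟨⟨x, hx, hW⟩, hpos⟩ => ⟨⟨x, hx, ?_⟩, ?_⟩)
    (fun m n W ⟨⟨x, hx, hW⟩, hpos⟩ => ⟨⟨shift^[m] x, hX.iterate m hx, ?_⟩, ?_⟩) m n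
  · exact cyl_subset_cyl_castAdd m n W hW
  · exact fun h => hpos (measure_mono_null (cyl_subset_cyl_castAdd m n W) h)
  · exact cyl_subset_preimage_cyl_natAdd m n W hW
  · intro h
    refine hpos (measure_mono_null (cyl_subset_preimage_cyl_natAdd m n W) ?_)
    rwa [(hμ.iterate m).measure_preimage (measurableSet_cyl n _).nullMeasurableSet]

lemma tendsto_div_iInf_of_add_le {f : ℕ → ℕ} (hf : ∀ m n, f (m + n) ≤ f m + f n) :
    Tendsto (fun n : ℕ => (f n : ℝ) / n) atTop
      (𝓝 (⨅ n : ℕ, (f (n + 1) : ℝ) / (n + 1))) := by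
  have hsub : Subadditive fun n => (f n : ℝ) := fun m n => by
    simp only; exact_mod_cast hf m n
  have hlim : hsub.lim = ⨅ n : ℕ, (f (n + 1) : ℝ) / (n + 1) := by
    rw [Subadditive.lim, iInf]
    congr 1
    ext a
    constructor
    · rintro ⟨_ | n, hn, rfl⟩
      · exact absurd hn (by simp)
      · exact ⟨n, by push_cast; rfl⟩
    · rintro ⟨n, rfl⟩
      exact ⟨n + 1, Nat.le_add_left 1 n, by push_cast; rfl⟩
  rw [← hlim]
  exact hsub.tendsto_lim ⟨0, by rintro _ ⟨n, rfl⟩; positivity⟩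

lemma tendsto_maxOnes {X : Set Omega} (hX : Set.MapsTo shift X X) :
    Tendsto (fun n : ℕ => (maxOnes X n : ℝ) / n) atTop (𝓝 (Dtop X)) :=
  tendsto_div_iInf_of_add_le (maxOnes_add_le hX)

lemma tendsto_maxOnesPos {X : Set Omega} (hX : Set.MapsTo shift X X) {μ : Measure Omega}
    (hμ : MeasurePreserving shift μ μ) :
    Tendsto (fun n : ℕ => (maxOnesPos X μ n : ℝ) / n) atTop (𝓝 (Dnu X μ)) :=
  tendsto_div_iInf_of_add_le (maxOnesPos_add_le hX hμ)

lemma maxOnesPos_le_maxOnes (X : Set Omega) (μ : Measure Omega) (n : ℕ) :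
    maxOnesPos X μ n ≤ maxOnes X n :=
  Finset.sup_mono (Finset.monotone_filter_right _ fun _ _ => And.left)

lemma Dnu_le_Dtop (X : Set Omega) (μ : Measure Omega) : Dnu X μ ≤ Dtop X :=
  ciInf_mono ⟨0, by rintro _ ⟨n, rfl⟩; positivity⟩ fun n => by
    gcongr
    exact maxOnesPos_le_maxOnes X μ (n + 1)

lemma lintegral_ones_word {μ : Measure Omega} (hμ : MeasurePreserving shift μ μ) (n : ℕ) :
    ∫⁻ x, (ones (word n x) : ℝ≥0∞) ∂μ = n * μ {x | x 0 = true} := by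
  have h_sum (x : Omega) : (ones (word n x) : ℝ≥0∞) =
      ∑ i : Fin n, {y : Omega | y i = true}.indicator 1 x := by
    simp only [ones_eq_sum, word, Set.indicator_apply, Set.mem_ofPred_eq, Pi.one_apply,
      Nat.cast_sum]
    exact Finset.sum_congr rfl fun i _ => by split_ifs with h <;> simp [h]
  have h_shift (i : ℕ) : μ {y : Omega | y i = true} = μ {x | x 0 = true} := by
    rw [← (hμ.iterate i).measure_preimage
      (measurableSet_setOf_apply_eq_true 0).nullMeasurableSet]
    simp [shift_iterate_apply]
  simp_rw [h_sum]
  rw [lintegral_finsetSum _ fun i _ =>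
    measurable_one.indicator (measurableSet_setOf_apply_eq_true _)]
  simp [lintegral_indicator_one (measurableSet_setOf_apply_eq_true _), h_shift]

lemma ae_measure_cyl_word_ne_zero (μ : Measure Omega) (n : ℕ) :
    ∀ᵐ x ∂μ, μ (cyl n (word n x)) ≠ 0 := by
  refine measure_mono_null (fun x hx => ?_) (measure_iUnion_null (ι := {W // μ (cyl n W) = 0})
    fun W => W.2)
  exact Set.mem_iUnion.2 ⟨⟨word n x, not_not.1 hx⟩, fun _ => rfl⟩

lemma ae_ones_word_le_maxOnesPos {X : Set Omega} {μ : Measure Omega} (hX : ∀ᵐ x ∂μ, x ∈ X)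
    (n : ℕ) : ∀ᵐ x ∂μ, ones (word n x) ≤ maxOnesPos X μ n := by
  filter_upwards [hX, ae_measure_cyl_word_ne_zero μ n] with x hx hpos
  exact Finset.le_sup (Finset.mem_filter.2 ⟨Finset.mem_univ _, ⟨x, hx, fun _ => rfl⟩, hpos⟩)

lemma natCast_mul_measure_le_maxOnesPos {X : Set Omega} {μ : Measure Omega}
    [IsProbabilityMeasure μ] (hμ : MeasurePreserving shift μ μ) (hX : ∀ᵐ x ∂μ, x ∈ X)
    (n : ℕ) : n * μ {x | x 0 = true} ≤ maxOnesPos X μ n :=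
  calc n * μ {x | x 0 = true} = ∫⁻ x, (ones (word n x) : ℝ≥0∞) ∂μ :=
        (lintegral_ones_word hμ n).symm
    _ ≤ ∫⁻ _, (maxOnesPos X μ n : ℝ≥0∞) ∂μ :=
        lintegral_mono_ae <| (ae_ones_word_le_maxOnesPos hX n).mono fun _ h => by exact_mod_cast h
    _ = maxOnesPos X μ n := by simp

lemma toReal_measure_le_Dnu {X : Set Omega} {μ : Measure Omega} [IsProbabilityMeasure μ]
    (hμ : MeasurePreserving shift μ μ) (hX : ∀ᵐ x ∂μ, x ∈ X) :
    (μ {x | x 0 = true}).toReal ≤ Dnu X μ := by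
  refine le_ciInf fun n => (le_div_iff₀ (by positivity)).2 ?_
  have h := ENNReal.toReal_mono (by simp) (natCast_mul_measure_le_maxOnesPos hμ hX (n + 1))
  rw [ENNReal.toReal_mul] at h
  simpa [mul_comm, ENNReal.toReal_add] using h

lemma ones_word_eq_card (n : ℕ) (x : Omega) :
    ones (word n x) = #{i ∈ Finset.range n | x (i : ℕ) = true} := by
  rw [ones_eq_sum, Finset.card_filter]
  exact Fin.sum_univ_eq_sum_range (fun i => if x i = true then 1 else 0) n

lemma empiricalMeasure_shift_setOf_zero_eq_true (x : Omega) (n : ℕ) :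
    (empiricalMeasure shift x n : Measure Omega) {y | y 0 = true} =
      ((n : ℝ≥0∞) + 1)⁻¹ * ones (word (n + 1) x) := by
  simp [empiricalMeasure_apply _ _ _ (measurableSet_setOf_apply_eq_true 0), ones_word_eq_card,
    shift_iterate_apply]

lemma exists_mem_ones_word_eq_maxOnes {X : Set Omega} (hne : X.Nonempty) (n : ℕ) :
    ∃ x ∈ X, ones (word n x) = maxOnes X n := by
  obtain ⟨x₀, hx₀⟩ := hne
  obtain ⟨W, hW, hmax⟩ := Finset.exists_mem_eq_sup (Finset.univ.filter (· ∈ lang X n))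
    ⟨word n x₀, Finset.mem_filter.2 ⟨Finset.mem_univ _, x₀, hx₀, fun _ => rfl⟩⟩ ones
  obtain ⟨x, hx, hxW⟩ := (Finset.mem_filter.1 hW).2
  exact ⟨x, hx, by rw [maxOnes, hmax, show word n x = W from funext hxW]⟩

abbrev InvariantProbabilityMeasure (X : Set Omega) : Type :=
  {μ : Measure Omega // IsProbabilityMeasure μ ∧ μ X = 1 ∧ Measure.map shift μ = μ}

lemma exists_invariantProbabilityMeasure_toReal_measure_eq_Dtop {X : Set Omega}
    (hcl : IsClosed X) (hne : X.Nonempty) (hX : Set.MapsTo shift X X) :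
    ∃ μ : InvariantProbabilityMeasure X,
      ((μ : Measure Omega) {x | x 0 = true}).toReal = Dtop X := by
  choose x hxX hx using exists_mem_ones_word_eq_maxOnes hne
  obtain ⟨μ, φ, hφ, hlim⟩ :=
    CompactSpace.tendsto_subseq fun n => empiricalMeasure shift (x (n + 1)) n
  refine ⟨⟨μ, inferInstance, ?_, map_eq_of_tendsto_empiricalMeasure continuous_shift
    (x := fun k => x (φ k + 1)) hφ.tendsto_atTop hlim⟩, ?_⟩
  · refine le_antisymm prob_le_one ?_
    have h_one (k : ℕ) : (empiricalMeasure shift (x (φ k + 1)) (φ k) : Measure Omega) X = 1 :=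
      empiricalMeasure_apply_eq_one _ _ _ hcl.measurableSet fun i => hX.iterate i (hxX _)
    simpa [h_one] using ProbabilityMeasure.limsup_measure_closed_le_of_tendsto hlim hcl
  · have h_meas := ProbabilityMeasure.tendsto_measure_of_null_frontier_of_tendsto' hlim
      (E := {x : Omega | x 0 = true}) (by simp [(isClopen_setOf_apply_eq_true 0).frontier_eq])
    have h_real := (ENNReal.tendsto_toReal (measure_ne_top _ _)).comp h_meas
    have h_D : Tendsto (fun k => (maxOnes X (φ k + 1) : ℝ) / (φ k + 1 : ℕ)) atTop
        (𝓝 (Dtop X)) :=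
      (tendsto_maxOnes hX).comp ((tendsto_add_atTop_nat 1).comp hφ.tendsto_atTop)
    refine tendsto_nhds_unique h_real (h_D.congr fun k => ?_)
    simp [empiricalMeasure_shift_setOf_zero_eq_true, hx, ENNReal.toReal_add, div_eq_inv_mul]

theorem stmt4_general (X : Set Omega) (hcl : IsClosed X)
    (hinv : shift '' X = X)
    (ν : Measure Omega) [IsProbabilityMeasure ν] (hsupp : ν X = 1)
    (herg : Ergodic shift ν) :
    Tendsto (fun n : ℕ => (maxOnes X n : ℝ) / n) atTop (nhds (Dtop X)) ∧
    Tendsto (fun n : ℕ => (maxOnesPos X ν n : ℝ) / n) atTop (nhds (Dnu X ν)) ∧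
    (ν {x | x 0 = true}).toReal ≤ Dnu X ν ∧
    Dnu X ν ≤ Dtop X ∧
    Dtop X = dsup X ∧
    Dtop X = ⨆ μ : {μ : Measure Omega //
        IsProbabilityMeasure μ ∧ μ X = 1 ∧ Measure.map shift μ = μ},
      Dnu X (μ : Measure Omega) := by
  have hX : Set.MapsTo shift X X := fun x hx => hinv ▸ Set.mem_image_of_mem shift hx
  have h_ae {μ : Measure Omega} [IsProbabilityMeasure μ] (hμX : μ X = 1) :
      ∀ᵐ x ∂μ, x ∈ X :=
    (ae_mem_iff_measure_eq hcl.measurableSet.nullMeasurableSet).2 (by rw [hμX, measure_univ])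
  have h_le (μ : InvariantProbabilityMeasure X) :
      ((μ : Measure Omega) {x | x 0 = true}).toReal ≤ Dnu X μ :=
    have := μ.2.1
    toReal_measure_le_Dnu ⟨measurable_shift, μ.2.2.2⟩ (h_ae μ.2.2.1)
  obtain ⟨μ, hμD⟩ := exists_invariantProbabilityMeasure_toReal_measure_eq_Dtop hcl
    (nonempty_of_measure_ne_zero (μ := ν) (by simp [hsupp])) hX
  have : Nonempty (InvariantProbabilityMeasure X) := ⟨μ⟩
  refine ⟨tendsto_maxOnes hX, tendsto_maxOnesPos hX herg.toMeasurePreserving,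
    toReal_measure_le_Dnu herg.toMeasurePreserving (h_ae hsupp), Dnu_le_Dtop X ν, ?_, ?_⟩
  · refine (ciSup_eq_of_forall_le_of_forall_lt_exists_gt (fun μ' => (h_le μ').trans
      (Dnu_le_Dtop X _)) fun w hw => ⟨μ, hμD ▸ hw⟩).symm
  · refine (ciSup_eq_of_forall_le_of_forall_lt_exists_gt (fun μ' => Dnu_le_Dtop X _)
      fun w hw => ⟨μ, hw.trans_le (hμD ▸ h_le μ)⟩).symm

/-- for every ergodic invariant `ν` on a subshift `X`:
`d_ν ≤ D_ν ≤ D = d` (here `Dnu` and `Dtop` are indeed the limits of the corresponding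
sequences, as asserted by the two `Tendsto` clauses), and consequently the variational
principle `D = sup_{ν ∈ M(X,S)} D_ν` holds. -/
theorem stmt4 (X : Set Omega) (hcl : IsClosed X) (hne : X.Nonempty)
    (hinv : shift '' X = X)
    (ν : Measure Omega) [IsProbabilityMeasure ν] (hsupp : ν X = 1)
    (herg : Ergodic shift ν) :
    Tendsto (fun n : ℕ => (maxOnes X n : ℝ) / n) atTop (nhds (Dtop X)) ∧
    Tendsto (fun n : ℕ => (maxOnesPos X ν n : ℝ) / n) atTop (nhds (Dnu X ν)) ∧
    (ν {x | x 0 = true}).toReal ≤ Dnu X ν ∧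
    Dnu X ν ≤ Dtop X ∧
    Dtop X = dsup X ∧
    Dtop X = ⨆ μ : {μ : Measure Omega //
        IsProbabilityMeasure μ ∧ μ X = 1 ∧ Measure.map shift μ = μ},
      Dnu X (μ : Measure Omega) :=
  stmt4_general X hcl hinv ν hsupp herg
end

section
/- Let X ⊆ {0,1}^ℤ be a subshift with hereditary closure X̃, and let ν be an ergodic, non-atomic invariant measure on X that is ones-saturated (D_ν = D). If d(X,S) = h(X̃,S), then κ = ν * B_{1/2,1/2} does not have the Gibbs property on X̃: there is no constant a > 0 such that κ(C) ≥ a·2^{-|C|·h(X̃,S)} for all words C in L(X̃) with κ(C) > 0. -/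
/-!
Ones-saturation and `d = h` give `h ≤ maxOnesPos X ν n / n` for every `n`: the sequence
`maxOnesPos X ν` is subadditive by shift invariance, so by Fekete's lemma its limit `D_ν` lies
below every term, while `d ≤ D` because `n μ[1] = E_μ(number of ones in [0, n)) ≤ maxOnes X n`.
Let `W` be a `ν`-positive word of length `n` with the maximal number `k ≥ n h` of ones. Every
strict superword of `W` is then `ν`-null, and `Q(x, y) ∈ [W]` forces both `x` and `y` to
dominate `W`, so `κ[W] ≤ ν[W] 2^{-k} ≤ ν[W] 2^{-n h}`. The Gibbs bound therefore gives
`ν[W] ≥ a` for words of every length. By shift invariance and continuity from above, the points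
all of whose central cylinders have mass `≥ a` form a set of mass `≥ a`, and any such point is
an atom of mass `≥ a`.
-/

open MeasureTheory Filter Real
open scoped ENNReal

attribute [local instance] Classical.propDecidable

/-- The hereditary closure of `X`. -/
def her (X : Set Omega) : Set Omega := {z | ∃ x ∈ X, ∀ i, z i ≤ x i}

/-- Coordinatewise multiplication `Q(x,y)_i = x_i · y_i`. -/
def Qmul (p : Omega × Omega) : Omega := fun i => p.1 i && p.2 i

namespace BinaryShift

def cylAt (m : ℤ) (n : ℕ) (W : Fin n → Bool) : Set Omega :=
  {x | ∀ i : Fin n, x (m + (i : ℕ)) = W i}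

theorem cyl_eq_cylAt_zero (n : ℕ) (W : Fin n → Bool) : cyl n W = cylAt 0 n W := by
  simp [cyl, cylAt]

theorem measurableSet_coord_eq (j : ℤ) (b : Bool) : MeasurableSet {x : Omega | x j = b} :=
  measurableSet_eq_fun (measurable_pi_apply j) measurable_const

theorem measurableSet_cylAt (m : ℤ) (n : ℕ) (W : Fin n → Bool) :
    MeasurableSet (cylAt m n W) := by
  simp only [cylAt, Set.ofPred_forall]
  exact .iInter fun i => measurableSet_coord_eq _ _

theorem measurableSet_cyl (n : ℕ) (W : Fin n → Bool) : MeasurableSet (cyl n W) := by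
  rw [cyl_eq_cylAt_zero]
  exact measurableSet_cylAt 0 n W

theorem measurable_shift : Measurable shift :=
  measurable_pi_lambda _ fun _ => measurable_pi_apply _

theorem shift_iterate_apply (m : ℕ) (x : Omega) (j : ℤ) : shift^[m] x j = x (j + m) := by
  induction m generalizing x j with
  | zero => simp
  | succ m ih =>
    rw [Function.iterate_succ_apply, ih]
    simp only [shift, Nat.cast_succ]
    ring_nf

theorem preimage_shift_iterate_cylAt (m : ℕ) (k : ℤ) (n : ℕ) (W : Fin n → Bool) :
    shift^[m] ⁻¹' cylAt k n W = cylAt (k + m) n W := by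
  ext x
  simp only [Set.mem_preimage, cylAt, Set.mem_ofPred_eq, shift_iterate_apply, add_right_comm]

theorem measure_cylAt {ν : Measure Omega} (hσ : MeasurePreserving shift ν ν) (m : ℤ) (n : ℕ)
    (W : Fin n → Bool) : ν (cylAt m n W) = ν (cyl n W) := by
  have hadd (k : ℤ) (j : ℕ) : ν (cylAt (k + j) n W) = ν (cylAt k n W) := by
    rw [← preimage_shift_iterate_cylAt]
    exact (hσ.iterate j).measure_preimage (measurableSet_cylAt _ _ _).nullMeasurableSet
  rw [cyl_eq_cylAt_zero]
  obtain ⟨j, rfl | rfl⟩ := Int.eq_nat_or_neg m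
  · simpa using hadd 0 j
  · simpa using (hadd (-j) j).symm

section Words

variable {n : ℕ}

theorem disjoint_cyl {W V : Fin n → Bool} (h : W ≠ V) : Disjoint (cyl n W) (cyl n V) :=
  Set.disjoint_left.2 fun _ hW hV => h (funext fun i => (hW i).symm.trans (hV i))

theorem measure_biUnion_cyl (μ : Measure Omega) (s : Finset (Fin n → Bool)) :
    μ (⋃ W ∈ s, cyl n W) = ∑ W ∈ s, μ (cyl n W) :=
  measure_biUnion_finset (fun _ _ _ _ h => disjoint_cyl h) fun W _ => measurableSet_cyl n W

theorem iUnion_cyl : ⋃ W : Fin n → Bool, cyl n W = Set.univ :=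
  Set.eq_univ_of_forall fun x => Set.mem_iUnion.2 ⟨fun i => x ((i : ℕ) : ℤ), fun _ => rfl⟩

theorem sum_measure_cyl (μ : Measure Omega) [IsProbabilityMeasure μ] :
    ∑ W : Fin n → Bool, μ (cyl n W) = 1 := by
  rw [← measure_biUnion_cyl, ← measure_univ (μ := μ), ← iUnion_cyl (n := n)]
  simp

theorem mem_lang_of_measure_cyl_ne_zero {X : Set Omega} {μ : Measure Omega}
    [IsProbabilityMeasure μ] (hX : μ X = 1) {W : Fin n → Bool} (h : μ (cyl n W) ≠ 0) :
    W ∈ lang X n := by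
  by_contra hW
  refine h ((prob_compl_eq_one_iff (measurableSet_cyl n W)).1 (le_antisymm prob_le_one ?_))
  exact hX ▸ measure_mono fun x hx hxW => hW ⟨x, hx, hxW⟩

theorem ones_eq_add {m : ℕ} (W : Fin (m + n) → Bool) :
    ones W = ones (fun i => W (Fin.castAdd n i)) + ones (fun j => W (Fin.natAdd m j)) := by
  simp only [ones, Finset.card_filter]
  exact Fin.sum_univ_add _

theorem ones_lt_ones {W V : Fin n → Bool} (h : W < V) : ones W < ones V := by
  obtain ⟨hle, i, hi⟩ := Pi.lt_def.1 h
  refine Finset.card_lt_card (Finset.ssubset_iff_of_subset ?_ |>.2 ⟨i, ?_, ?_⟩)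
  · intro j hj
    simp only [Finset.mem_filter, Finset.mem_univ, true_and] at hj ⊢
    exact Bool.le_iff_imp.1 (hle j) hj
  · simpa using (Bool.lt_iff.1 hi).2
  · simpa using (Bool.lt_iff.1 hi).1

end Words

section MaxOnesPos

variable {X : Set Omega} {ν : Measure Omega} [IsProbabilityMeasure ν] {n : ℕ}

theorem ones_le_maxOnesPos (hX : ν X = 1) {W : Fin n → Bool} (h : ν (cyl n W) ≠ 0) :
    ones W ≤ maxOnesPos X ν n :=
  Finset.le_sup (f := ones)
    (Finset.mem_filter.2 ⟨Finset.mem_univ _, mem_lang_of_measure_cyl_ne_zero hX h, h⟩)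

theorem exists_ones_eq_maxOnesPos (hX : ν X = 1) (n : ℕ) :
    ∃ W : Fin n → Bool, ν (cyl n W) ≠ 0 ∧ ones W = maxOnesPos X ν n := by
  obtain ⟨W₀, -, hW₀⟩ := Finset.exists_ne_zero_of_sum_ne_zero
    ((sum_measure_cyl ν (n := n)).trans_ne one_ne_zero)
  have hne :
      (Finset.univ.filter fun W : Fin n → Bool => W ∈ lang X n ∧ ν (cyl n W) ≠ 0).Nonempty :=
    ⟨W₀, Finset.mem_filter.2 ⟨Finset.mem_univ _, mem_lang_of_measure_cyl_ne_zero hX hW₀, hW₀⟩⟩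
  obtain ⟨W, hW, hsup⟩ := Finset.exists_mem_eq_sup _ hne ones
  exact ⟨W, (Finset.mem_filter.1 hW).2.2, hsup.symm⟩

theorem maxOnesPos_add_le (hσ : MeasurePreserving shift ν ν) (hX : ν X = 1) (m n : ℕ) :
    maxOnesPos X ν (m + n) ≤ maxOnesPos X ν m + maxOnesPos X ν n := by
  refine Finset.sup_le fun W hW => ?_
  have hW : ν (cyl (m + n) W) ≠ 0 := (Finset.mem_filter.1 hW).2.2
  have hprefix : cyl (m + n) W ⊆ cyl m fun i => W (Fin.castAdd n i) :=
    fun x hx i => hx (Fin.castAdd n i)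
  have hsuffix : cyl (m + n) W ⊆ cylAt m n fun j => W (Fin.natAdd m j) := by
    intro x hx j
    simpa [Nat.cast_add] using hx (Fin.natAdd m j)
  rw [ones_eq_add]
  refine add_le_add (ones_le_maxOnesPos hX fun h0 => hW (measure_mono_null hprefix h0))
    (ones_le_maxOnesPos hX fun h0 => hW (measure_mono_null hsuffix ?_))
  rwa [measure_cylAt hσ]

theorem le_maxOnesPos_div (hσ : MeasurePreserving shift ν ν) (hX : ν X = 1) {Dν : ℝ}
    (hDν : Tendsto (fun n : ℕ => (maxOnesPos X ν n : ℝ) / n) atTop (nhds Dν)) (hn : n ≠ 0) :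
    Dν ≤ maxOnesPos X ν n / n := by
  have hsub : Subadditive fun n => (maxOnesPos X ν n : ℝ) := fun m k => by
    dsimp only
    exact_mod_cast maxOnesPos_add_le hσ hX m k
  have hbdd : BddBelow (Set.range fun k : ℕ => (maxOnesPos X ν k : ℝ) / k) :=
    ⟨0, by rintro _ ⟨k, rfl⟩; positivity⟩
  rw [tendsto_nhds_unique hDν (hsub.tendsto_lim hbdd)]
  exact hsub.lim_le_div hbdd hn

end MaxOnesPos

section Density

variable {X : Set Omega} {μ : Measure Omega} {n : ℕ}

theorem cylAt_one_true (m : ℤ) : cylAt m 1 (fun _ => true) = {x | x m = true} := by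
  ext x
  simp [cylAt]

theorem measure_coord_true (hσ : MeasurePreserving shift μ μ) (m : ℤ) :
    μ {x | x m = true} = μ {x | x 0 = true} := by
  rw [← cylAt_one_true, measure_cylAt hσ, cyl_eq_cylAt_zero, cylAt_one_true]

theorem measure_coord_true_eq_sum (i : Fin n) :
    μ {x | x i = true} = ∑ W with W i = true, μ (cyl n W) := by
  rw [← measure_biUnion_cyl]
  congr 1
  ext x
  simp only [Set.mem_ofPred_eq, Set.mem_iUnion, Finset.mem_filter, Finset.mem_univ, true_and]
  exact ⟨fun hx => ⟨fun j => x ((j : ℕ) : ℤ), hx, fun _ => rfl⟩, fun ⟨W, hW, hx⟩ => hx i ▸ hW⟩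

theorem sum_measure_coord_true (n : ℕ) :
    ∑ i : Fin n, μ {x | x i = true} = ∑ W : Fin n → Bool, ones W * μ (cyl n W) := by
  simp_rw [measure_coord_true_eq_sum, Finset.sum_filter]
  rw [Finset.sum_comm]
  refine Finset.sum_congr rfl fun W _ => ?_
  rw [← Finset.sum_filter, Finset.sum_const, ones, nsmul_eq_mul]

theorem ones_le_maxOnes {W : Fin n → Bool} (h : W ∈ lang X n) : ones W ≤ maxOnes X n :=
  Finset.le_sup (f := ones) (Finset.mem_filter.2 ⟨Finset.mem_univ _, h⟩)

theorem measure_coord_true_le_maxOnes_div [IsProbabilityMeasure μ]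
    (hσ : MeasurePreserving shift μ μ) (hX : μ X = 1) (hn : n ≠ 0) :
    (μ {x | x 0 = true}).toReal ≤ maxOnes X n / n := by
  have hmean : n * μ {x | x 0 = true} ≤ maxOnes X n := calc
    n * μ {x | x 0 = true} = ∑ i : Fin n, μ {x | x i = true} := by
      simp [measure_coord_true hσ]
    _ = ∑ W : Fin n → Bool, ones W * μ (cyl n W) := sum_measure_coord_true n
    _ ≤ ∑ W : Fin n → Bool, maxOnes X n * μ (cyl n W) := by
      refine Finset.sum_le_sum fun W _ => ?_
      by_cases h : μ (cyl n W) = 0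
      · simp [h]
      · gcongr
        exact ones_le_maxOnes (mem_lang_of_measure_cyl_ne_zero hX h)
    _ = maxOnes X n := by rw [← Finset.mul_sum, sum_measure_cyl, mul_one]
  rw [le_div_iff₀ (by positivity), mul_comm]
  simpa using ENNReal.toReal_mono (ENNReal.natCast_ne_top _) hmean

theorem dsup_le {D : ℝ} (hD : Tendsto (fun n : ℕ => (maxOnes X n : ℝ) / n) atTop (nhds D)) :
    dsup X ≤ D := by
  refine Real.iSup_le (fun ⟨μ, hμ, hX, hmap⟩ => ?_) (ge_of_tendsto' hD fun n => by positivity)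
  refine ge_of_tendsto hD ?_
  filter_upwards [eventually_ne_atTop 0] with n hn
  exact measure_coord_true_le_maxOnes_div ⟨measurable_shift, hmap⟩ hX hn

end Density

section Kappa

variable {n : ℕ}

def upCyl (n : ℕ) (W : Fin n → Bool) : Set Omega := {x | ∀ i : Fin n, W i ≤ x ((i : ℕ) : ℤ)}

theorem upCyl_eq_biUnion (W : Fin n → Bool) :
    upCyl n W = ⋃ V ∈ Fintype.piFinset fun i => {b | W i ≤ b}, cyl n V := by
  ext x
  simp only [upCyl, Set.mem_ofPred_eq, Set.mem_iUnion, Fintype.mem_piFinset, Finset.mem_filter,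
    Finset.mem_univ, true_and, exists_prop]
  exact ⟨fun hx => ⟨fun j => x ((j : ℕ) : ℤ), hx, fun _ => rfl⟩,
    fun ⟨V, hWV, hx⟩ i => (hx i).symm ▸ hWV i⟩

theorem measure_upCyl_of_maximal {ν : Measure Omega} {W : Fin n → Bool}
    (hmax : ∀ V, W < V → ν (cyl n V) = 0) : ν (upCyl n W) = ν (cyl n W) := by
  rw [upCyl_eq_biUnion, measure_biUnion_cyl]
  refine Finset.sum_eq_single W (fun V hV hne => hmax V ?_) (fun h => absurd ?_ h)
  · exact lt_of_le_of_ne (fun i => by simpa using Fintype.mem_piFinset.1 hV i) (Ne.symm hne)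
  · simp

theorem measure_upCyl_eq_inv_two_pow {B : Measure Omega}
    (hB : ∀ (m : ℕ) (V : Fin m → Bool), B (cyl m V) = (2 : ℝ≥0∞)⁻¹ ^ m) (W : Fin n → Bool) :
    B (upCyl n W) = (2 : ℝ≥0∞)⁻¹ ^ ones W := by
  rw [upCyl_eq_biUnion, measure_biUnion_cyl, Finset.sum_congr rfl fun V _ => hB n V,
    Finset.sum_const, nsmul_eq_mul, Fintype.card_piFinset, ← Fin.prod_const, Nat.cast_prod,
    ← Finset.prod_mul_distrib, ones, ← Finset.prod_const, Finset.prod_filter]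
  refine Finset.prod_congr rfl fun i _ => ?_
  cases W i
  · simp [ENNReal.mul_inv_cancel]
  · simp [Bool.le_iff_imp, Finset.filter_insert, Finset.filter_singleton]

theorem measurable_Qmul : Measurable Qmul := by
  refine measurable_pi_lambda _ fun i => ?_
  have hfst : Measurable fun p : Omega × Omega => p.1 i :=
    (measurable_pi_apply i).comp measurable_fst
  have hsnd : Measurable fun p : Omega × Omega => p.2 i :=
    (measurable_pi_apply i).comp measurable_snd
  exact (measurable_of_countable fun b : Bool × Bool => b.1 && b.2).comp (hfst.prodMk hsnd)

theorem cyl_prod_subset_preimage_Qmul (W : Fin n → Bool) :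
    cyl n W ×ˢ cyl n W ⊆ Qmul ⁻¹' cyl n W := by
  rintro ⟨x, y⟩ ⟨hx : x ∈ cyl n W, hy : y ∈ cyl n W⟩ i
  show (x _ && y _) = W i
  rw [hx i, hy i, Bool.and_self]

theorem preimage_Qmul_subset_upCyl_prod (W : Fin n → Bool) :
    Qmul ⁻¹' cyl n W ⊆ upCyl n W ×ˢ upCyl n W := by
  rintro ⟨x, y⟩ hxy
  exact ⟨fun i => hxy i ▸ Bool.and_le_left _ _, fun i => hxy i ▸ Bool.and_le_right _ _⟩

variable {ν B : Measure Omega} [SFinite B]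
  (hB : ∀ (m : ℕ) (V : Fin m → Bool), B (cyl m V) = (2 : ℝ≥0∞)⁻¹ ^ m)
include hB

theorem map_Qmul_cyl_ne_zero {W : Fin n → Bool} (h : ν (cyl n W) ≠ 0) :
    Measure.map Qmul (ν.prod B) (cyl n W) ≠ 0 := by
  rw [Measure.map_apply measurable_Qmul (measurableSet_cyl n W)]
  refine fun h0 => h ?_
  have := measure_mono_null (cyl_prod_subset_preimage_Qmul W) h0
  rw [Measure.prod_prod, hB] at this
  simpa using this

theorem map_Qmul_cyl_le (W : Fin n → Bool) :
    Measure.map Qmul (ν.prod B) (cyl n W) ≤ ν (upCyl n W) * (2 : ℝ≥0∞)⁻¹ ^ ones W := by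
  rw [Measure.map_apply measurable_Qmul (measurableSet_cyl n W),
    ← measure_upCyl_eq_inv_two_pow hB, ← Measure.prod_prod]
  exact measure_mono (preimage_Qmul_subset_upCyl_prod W)

end Kappa

section Gibbs

def IsGibbs (κ : Measure Omega) (Y : Set Omega) (h a : ℝ) : Prop :=
  ∀ (n : ℕ) (C : Fin n → Bool), C ∈ lang Y n → κ (cyl n C) ≠ 0 →
    a * (2 : ℝ) ^ (-(n : ℝ) * h) ≤ (κ (cyl n C)).toReal

theorem lang_subset_lang_her (X : Set Omega) (n : ℕ) : lang X n ⊆ lang (her X) n :=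
  fun _ ⟨x, hx, hxW⟩ => ⟨x, ⟨x, hx, fun _ => le_rfl⟩, hxW⟩

theorem le_toReal_of_le_mul_inv_two_pow {p q : ℝ≥0∞} {a t : ℝ} {k : ℕ} (hp : p ≠ ⊤)
    (hq : q ≤ p * 2⁻¹ ^ k) (hlower : a * 2 ^ (-t) ≤ q.toReal) (ht : t ≤ k) :
    a ≤ p.toReal := by
  have hupper : q.toReal ≤ p.toReal * 2 ^ (-t) := calc
    q.toReal ≤ (p * 2⁻¹ ^ k).toReal := ENNReal.toReal_mono (by finiteness) hq
    _ = p.toReal * 2 ^ (-(k : ℝ)) := by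
      simp [ENNReal.toReal_mul, Real.rpow_neg, Real.rpow_natCast]
    _ ≤ p.toReal * 2 ^ (-t) := by gcongr; norm_num
  exact le_of_mul_le_mul_right (hlower.trans hupper) (by positivity)

theorem exists_le_measure_cyl_of_isGibbs {X : Set Omega} {ν B : Measure Omega}
    [IsProbabilityMeasure ν] [SFinite B] (hX : ν X = 1)
    (hB : ∀ (m : ℕ) (V : Fin m → Bool), B (cyl m V) = (2 : ℝ≥0∞)⁻¹ ^ m) {h a : ℝ}
    (hdensity : ∀ n ≠ 0, h ≤ maxOnesPos X ν n / n)
    (hgibbs : IsGibbs (Measure.map Qmul (ν.prod B)) (her X) h a) (n : ℕ) :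
    ∃ W : Fin n → Bool, ENNReal.ofReal a ≤ ν (cyl n W) := by
  obtain ⟨W, hW, hmax⟩ := exists_ones_eq_maxOnesPos hX n
  have hnull (V : Fin n → Bool) (hWV : W < V) : ν (cyl n V) = 0 := by
    by_contra hV
    exact (ones_lt_ones hWV).not_ge (hmax ▸ ones_le_maxOnesPos hX hV)
  have hher : W ∈ lang (her X) n :=
    lang_subset_lang_her X n (mem_lang_of_measure_cyl_ne_zero hX hW)
  have hexp : (n : ℝ) * h ≤ ones W := by
    rcases eq_or_ne n 0 with rfl | hn
    · simp
    · rw [hmax, ← le_div_iff₀' (by positivity)]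
      exact hdensity n hn
  refine ⟨W, ENNReal.ofReal_le_of_le_toReal ?_⟩
  refine le_toReal_of_le_mul_inv_two_pow (q := Measure.map Qmul (ν.prod B) (cyl n W))
    (measure_ne_top ν _) ?_ ?_ hexp
  · rw [← measure_upCyl_of_maximal hnull]
    exact map_Qmul_cyl_le hB W
  · rw [← neg_mul]
    exact hgibbs n W hher (map_Qmul_cyl_ne_zero hB hW)

end Gibbs

section Atom

variable {n : ℕ} {x y : Omega}

def centralCyl (n : ℕ) (x : Omega) : Set Omega :=
  cylAt (-n) (2 * n) fun i => x (-n + (i : ℕ))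

theorem centralCyl_eq_of_mem_cylAt {V : Fin (2 * n) → Bool} (hy : y ∈ cylAt (-n) (2 * n) V) :
    centralCyl n y = cylAt (-n) (2 * n) V := by
  rw [centralCyl, show (fun i : Fin (2 * n) => y (-n + (i : ℕ))) = V from funext hy]

theorem centralCyl_eq_of_mem (hy : y ∈ centralCyl n x) : centralCyl n y = centralCyl n x :=
  centralCyl_eq_of_mem_cylAt hy

theorem centralCyl_antitone (x : Omega) : Antitone fun n => centralCyl n x := by
  refine antitone_nat_of_succ_le fun n y hy i => ?_
  have h := hy ⟨i + 1, by omega⟩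
  simp only [Nat.cast_add, Nat.cast_one] at h
  convert h using 2 <;> ring

theorem iInter_centralCyl (x : Omega) : ⋂ n, centralCyl n x = {x} := by
  refine Set.eq_singleton_iff_unique_mem.2 ⟨Set.mem_iInter.2 fun _ _ => rfl, fun y hy => ?_⟩
  funext j
  have hj := Set.mem_iInter.1 hy (j.natAbs + 1) ⟨(j + (j.natAbs + 1 : ℕ)).toNat, by omega⟩
  have hk : -((j.natAbs + 1 : ℕ) : ℤ) + ((j + (j.natAbs + 1 : ℕ)).toNat : ℕ) = j := by omega
  exact (congrArg y hk).symm.trans (hj.trans (congrArg x hk))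

theorem measurableSet_setOf_le_measure_centralCyl (ν : Measure Omega) (c : ℝ≥0∞) (n : ℕ) :
    MeasurableSet {x | c ≤ ν (centralCyl n x)} := by
  have hwindow : Measurable fun x : Omega => fun i : Fin (2 * n) => x (-n + (i : ℕ)) :=
    measurable_pi_lambda _ fun _ => measurable_pi_apply _
  exact hwindow (Set.toFinite {V | c ≤ ν (cylAt (-n) (2 * n) V)}).measurableSet

theorem exists_le_measure_singleton {ν : Measure Omega} [IsFiniteMeasure ν]
    (hσ : MeasurePreserving shift ν ν) {c : ℝ≥0∞} (hc : c ≠ 0)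
    (hheavy : ∀ n, ∃ W : Fin n → Bool, c ≤ ν (cyl n W)) : ∃ x, c ≤ ν {x} := by
  set A : ℕ → Set Omega := fun n => {x | c ≤ ν (centralCyl n x)}
  have hA_anti : Antitone A :=
    fun m n hmn x hx => hx.trans (measure_mono (centralCyl_antitone x hmn))
  have hA_large (n : ℕ) : c ≤ ν (A n) := by
    obtain ⟨W, hW⟩ := hheavy (2 * n)
    rw [← measure_cylAt hσ (-n)] at hW
    obtain ⟨y, hy⟩ := nonempty_of_measure_ne_zero (hc.bot_lt.trans_le hW).ne'
    rw [← centralCyl_eq_of_mem_cylAt hy] at hW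
    refine hW.trans (measure_mono fun z hz => ?_)
    show c ≤ ν (centralCyl n z)
    rwa [centralCyl_eq_of_mem hz]
  have hI : c ≤ ν (⋂ n, A n) := by
    rw [hA_anti.measure_iInter
      (fun n => (measurableSet_setOf_le_measure_centralCyl ν c n).nullMeasurableSet)
      ⟨0, measure_ne_top ν _⟩]
    exact le_iInf hA_large
  obtain ⟨x, hx⟩ := nonempty_of_measure_ne_zero (hc.bot_lt.trans_le hI).ne'
  refine ⟨x, ?_⟩
  rw [← iInter_centralCyl x, (centralCyl_antitone x).measure_iInter
    (fun n => (measurableSet_cylAt _ _ _).nullMeasurableSet) ⟨0, measure_ne_top ν _⟩]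
  exact le_iInf fun n => Set.mem_iInter.1 hx n

end Atom

end BinaryShift

open BinaryShift in
theorem stmt13_general (X : Set Omega)
    (ν : Measure Omega) [IsProbabilityMeasure ν] (hsupp : ν X = 1)
    (herg : Ergodic shift ν)
    (hnonatomic : ∀ x : Omega, ν {x} = 0)
    (Dν D : ℝ)
    (hDν : Tendsto (fun n : ℕ => (maxOnesPos X ν n : ℝ) / n) atTop (nhds Dν))
    (hD : Tendsto (fun n : ℕ => (maxOnes X n : ℝ) / n) atTop (nhds D))
    (hsat : Dν = D)
    (htil : ℝ)
    (hdh : dsup X = htil)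
    (B : Measure Omega) [IsProbabilityMeasure B]
    (hB : ∀ (m : ℕ) (V : Fin m → Bool), B (cyl m V) = (2 : ℝ≥0∞)⁻¹ ^ m) :
    ¬ ∃ a : ℝ, 0 < a ∧
      ∀ (n : ℕ) (C : Fin n → Bool), C ∈ lang (her X) n →
        Measure.map Qmul (ν.prod B) (cyl n C) ≠ 0 →
        a * (2 : ℝ) ^ (-(n : ℝ) * htil) ≤
          (Measure.map Qmul (ν.prod B) (cyl n C)).toReal := by
  rintro ⟨a, ha, hgibbs⟩
  have hσ : MeasurePreserving shift ν ν := herg.toMeasurePreserving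
  have hdensity (n : ℕ) (hn : n ≠ 0) : htil ≤ maxOnesPos X ν n / n :=
    hdh ▸ (dsup_le hD).trans (hsat ▸ le_maxOnesPos_div hσ hsupp hDν hn)
  have ha' : ENNReal.ofReal a ≠ 0 := (ENNReal.ofReal_pos.2 ha).ne'
  obtain ⟨x, hx⟩ := exists_le_measure_singleton hσ ha'
    (exists_le_measure_cyl_of_isGibbs hsupp hB hdensity hgibbs)
  exact ha' (le_zero_iff.1 (hnonatomic x ▸ hx))

/-- absence of the Gibbs property. Let `ν` be an ergodic, non-atomic
invariant measure on a subshift `X` which is ones-saturated (`D_ν = D`, where `Dν` and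
`D` are the limits of the corresponding sequences). If `d(X,S) = h(X̃,S)`, then
`κ = ν * B_{1/2,1/2}` does not have the Gibbs property on `X̃`. -/
theorem stmt13 (X : Set Omega) (hcl : IsClosed X) (hne : X.Nonempty)
    (hinv : shift '' X = X)
    (ν : Measure Omega) [IsProbabilityMeasure ν] (hsupp : ν X = 1)
    (herg : Ergodic shift ν)
    (hnonatomic : ∀ x : Omega, ν {x} = 0)
    (Dν D : ℝ)
    (hDν : Tendsto (fun n : ℕ => (maxOnesPos X ν n : ℝ) / n) atTop (nhds Dν))
    (hD : Tendsto (fun n : ℕ => (maxOnes X n : ℝ) / n) atTop (nhds D))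
    (hsat : Dν = D)
    (htil : ℝ)
    (hent : Tendsto (fun n : ℕ => logb 2 ((lang (her X) n).ncard) / n) atTop (nhds htil))
    (hdh : dsup X = htil)
    (B : Measure Omega) [IsProbabilityMeasure B]
    (hB : ∀ (m : ℕ) (V : Fin m → Bool), B (cyl m V) = (2 : ℝ≥0∞)⁻¹ ^ m) :
    ¬ ∃ a : ℝ, 0 < a ∧
      ∀ (n : ℕ) (C : Fin n → Bool), C ∈ lang (her X) n →
        Measure.map Qmul (ν.prod B) (cyl n C) ≠ 0 →
        a * (2 : ℝ) ^ (-(n : ℝ) * htil) ≤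
          (Measure.map Qmul (ν.prod B) (cyl n C)).toReal :=
  stmt13_general X ν hsupp herg hnonatomic Dν D hDν hD hsat htil hdh B hB
end

section
/- Every point y of the subshift Y = X_{{111,1001}} (binary sequences avoiding the words 111 and 1001) is dominated by a point of X = X_{{00,111}}: for each y ∈ Y there exists x ∈ X with y ≤ x coordinatewise. Hence Y is contained in the hereditary closure of X. -/
open MeasureTheory Filter Real
open scoped ENNReal

attribute [local instance] Classical.propDecidable

/-!
Inside each run of zeros of `y`, put zeros of `x` at the even offsets from the start of the run,
except the second-to-last position, and always at the last position (just before a one). Zeros of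
`x` are then never adjacent, and since runs of zeros in `y` never have length exactly 2 and runs
of ones have length at most 2, every window of length 3 meets a zero of `x`. The offset parity
`phase` satisfies a one-step recurrence, so both properties become a finite check on a window
of `y` of length 5.
-/

section Fill

variable (y : Omega)

/-- `Nat.find h` is the number of zeros between `p` and the nearest one to its left; when there is
no one to the left, the parity of `p` is used instead. -/
noncomputable def phase (p : ℤ) : Bool :=
  if h : ∃ n : ℕ, y (p - 1 - n) = true then decide (Even (Nat.find h)) else decide (Even p)

lemma phase_succ (p : ℤ) : phase y (p + 1) = (y p || !phase y p) := by
  have shift_back (n : ℕ) : y (p + 1 - 1 - (n + 1 : ℕ)) = y (p - 1 - n) := by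
    congr 1; push_cast; ring
  cases hp : y p
  · by_cases h : ∃ n : ℕ, y (p - 1 - n) = true
    · have h' : ∃ n : ℕ, y (p + 1 - 1 - n) = true :=
        ⟨Nat.find h + 1, (shift_back _).trans (Nat.find_spec h)⟩
      have hfind : Nat.find h' = Nat.find h + 1 :=
        (Nat.find_comp_succ h' ⟨_, (shift_back _).trans (Nat.find_spec h)⟩
          (by simpa using hp)).trans (by simp only [shift_back])
      rw [phase, phase, dif_pos h', dif_pos h, hfind]
      simp [Nat.even_add_one, -Nat.not_even_iff_odd]
    · have h' : ¬∃ n : ℕ, y (p + 1 - 1 - n) = true := by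
        rintro ⟨_ | n, hn⟩
        · simp_all
        · exact h ⟨n, (shift_back n).symm.trans hn⟩
      rw [phase, phase, dif_neg h', dif_neg h]
      simp [← Int.not_even_iff_odd]
  · have h' : ∃ n : ℕ, y (p + 1 - 1 - n) = true := ⟨0, by simpa using hp⟩
    rw [phase, dif_pos h', (Nat.find_eq_zero h').2 (by simpa using hp)]
    simp

noncomputable def fill : Omega := fun p => y p || !(y (p + 1) || (phase y p && !y (p + 2)))

lemma le_fill (p : ℤ) : y p ≤ fill y p := Bool.left_le_or _ _

lemma fill_avoids_00 (p : ℤ) : ¬(fill y p = false ∧ fill y (p + 1) = false) := by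
  simp only [fill, phase_succ, add_assoc, Int.reduceAdd]
  cases y p <;> cases y (p + 1) <;> cases y (p + 2) <;> cases y (p + 3) <;> cases phase y p <;> simp

lemma fill_avoids_111
    (h111 : ∀ i, ¬(y i = true ∧ y (i + 1) = true ∧ y (i + 2) = true))
    (h1001 : ∀ i, ¬(y i = true ∧ y (i + 1) = false ∧ y (i + 2) = false ∧ y (i + 3) = true))
    (p : ℤ) : ¬(fill y p = true ∧ fill y (p + 1) = true ∧ fill y (p + 2) = true) := by
  have h₁ := h111 p
  have h₂ := h1001 (p + 1)
  have hφ₂ : phase y (p + 2) = (y (p + 1) || !(y p || !phase y p)) := by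
    rw [show p + 2 = p + 1 + 1 by ring, phase_succ, phase_succ]
  simp only [fill, phase_succ, hφ₂, add_assoc, Int.reduceAdd] at h₂ ⊢
  revert h₁ h₂
  cases y p <;> cases y (p + 1) <;> cases y (p + 2) <;> cases y (p + 3) <;> cases y (p + 4) <;>
    cases phase y p <;> simp

end Fill

/-- every point of the SFT `Y` avoiding `111` and `1001` is dominated
coordinatewise by a point of the SFT `X` avoiding `00` and `111`; hence `Y` is contained
in the hereditary closure of `X`. -/
theorem stmt19 (Y X : Set Omega)
    (hY : Y = {y : Omega | ∀ i : ℤ,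
      ¬(y i = true ∧ y (i + 1) = true ∧ y (i + 2) = true) ∧
      ¬(y i = true ∧ y (i + 1) = false ∧ y (i + 2) = false ∧ y (i + 3) = true)})
    (hX : X = {x : Omega | ∀ i : ℤ,
      ¬(x i = false ∧ x (i + 1) = false) ∧
      ¬(x i = true ∧ x (i + 1) = true ∧ x (i + 2) = true)}) :
    (∀ y ∈ Y, ∃ x ∈ X, ∀ i : ℤ, y i ≤ x i) ∧ Y ⊆ her X := by
  have dominated : ∀ y ∈ Y, ∃ x ∈ X, ∀ i : ℤ, y i ≤ x i := by
    subst hY hX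
    intro y hy
    refine ⟨fill y, fun i => ⟨fill_avoids_00 y i, ?_⟩, le_fill y⟩
    exact fill_avoids_111 y (fun j => (hy j).1) (fun j => (hy j).2) i
  exact ⟨dominated, dominated⟩
end
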